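/- Let X ~ P and Y ~ Q be independent random variables on ℕ, with X ultra bounded with ratio λ and Y ultra bounded with ratio μ. Then X + Y (with distribution the convolution P*Q) is ultra bounded with ratio λ + μ, and for every α ∈ (0,1) the thinned distribution T_α(P) is ultra bounded with ratio αλ. -/

import Mathlib

/-!
By the Vandermonde identity for falling factorials, `(x + y)^(k↓) = ∑ C(k, i) x^(i↓) y^((k-i)↓)`,
the factorial moments of `P * Q` are the binomial convolution of those of `P` and `Q`. Pascal's
rule splits the `(k+1)`-st of them into two binomial convolutions at rank `k`, one with the index
of `P` raised by one and one with that of `Q`, bounded by `λ` and `μ` times the `k`-th.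
A binomial `(x, α)` variable has `k`-th factorial moment `α^k x^(k↓)`, so the factorial moments
of `T_α(P)` are `α^k` times those of `P`.
-/

open scoped BigOperators ENNReal
open Filter Topology

noncomputable section

/-- A probability mass function on ℕ: nonnegative values summing to 1. -/
def IsPMF (P : ℕ → ℝ) : Prop := (∀ x, 0 ≤ P x) ∧ HasSum P 1

/-- The α-thinning of a distribution `P` on ℕ. -/
def thin (α : ℝ) (P : ℕ → ℝ) (z : ℕ) : ℝ :=
  ∑' x : ℕ, P x * (x.choose z : ℝ) * α ^ z * (1 - α) ^ (x - z)

/-- Convolution of two distributions on ℕ. -/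
def conv (P Q : ℕ → ℝ) (n : ℕ) : ℝ :=
  ∑ k ∈ Finset.range (n + 1), P k * Q (n - k)

/-- The k-th factorial moment of a distribution `P` on ℕ, valued in `[0,∞]`. -/
def fmE (P : ℕ → ℝ) (k : ℕ) : ℝ≥0∞ :=
  ∑' x : ℕ, ENNReal.ofReal (P x) * (x.descFactorial k : ℝ≥0∞)

/-- Ultra boundedness with ratio λ: `E[X^((k+1)↓)] ≤ λ·E[X^(k↓)]` for all `k ≥ 0`. -/
def IsUB (P : ℕ → ℝ) (lam : ℝ) : Prop :=
  ∀ k : ℕ, fmE P (k + 1) ≤ ENNReal.ofReal lam * fmE P k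

open Finset

theorem Nat.descFactorial_add (i j k : ℕ) :
    (i + j).descFactorial k =
      ∑ ab ∈ antidiagonal k, k.choose ab.1 * (i.descFactorial ab.1 * j.descFactorial ab.2) := by
  have := Ring.descPochhammer_smeval_add (r := (i : ℤ)) (s := (j : ℤ)) k (Commute.all _ _)
  simp only [← Nat.cast_add, Polynomial.descPochhammer_smeval_eq_descFactorial] at this
  exact_mod_cast this

theorem Nat.descFactorial_mul_choose {x z k : ℕ} (hkz : k ≤ z) :
    z.descFactorial k * x.choose z = x.descFactorial k * (x - k).choose (z - k) := by
  rw [Nat.descFactorial_eq_factorial_mul_choose, Nat.descFactorial_eq_factorial_mul_choose,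
    mul_assoc, mul_comm (z.choose k), Nat.choose_mul hkz, mul_assoc]

theorem Nat.sum_range_choose_mul_pow_mul_descFactorial {R : Type*} [CommSemiring R] (a b : R)
    (x k : ℕ) :
    ∑ z ∈ range (x + 1), (x.choose z : R) * a ^ z * b ^ (x - z) * z.descFactorial k =
      x.descFactorial k * a ^ k * (a + b) ^ (x - k) := by
  rcases lt_or_ge x k with hxk | hkx
  · rw [Nat.descFactorial_eq_zero_iff_lt.mpr hxk, Nat.cast_zero, zero_mul, zero_mul]
    refine sum_eq_zero fun z hz => ?_
    have hzk : z < k := (Nat.lt_succ_iff.mp (mem_range.mp hz)).trans_lt hxk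
    rw [Nat.descFactorial_eq_zero_iff_lt.mpr hzk, Nat.cast_zero, mul_zero]
  obtain ⟨m, rfl⟩ := Nat.exists_eq_add_of_le hkx
  have hlow : ∀ z ∈ range k,
      ((k + m).choose z : R) * a ^ z * b ^ (k + m - z) * z.descFactorial k = 0 := fun z hz => by
    rw [Nat.descFactorial_eq_zero_iff_lt.mpr (mem_range.mp hz), Nat.cast_zero, mul_zero]
  have hhigh : ∀ w ∈ range (m + 1),
      ((k + m).choose (k + w) : R) * a ^ (k + w) * b ^ (k + m - (k + w)) *
          (k + w).descFactorial k =
        (k + m).descFactorial k * a ^ k * (a ^ w * b ^ (m - w) * m.choose w) := fun w _ => by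
    have key := Nat.descFactorial_mul_choose (x := k + m) (Nat.le_add_right k w)
    simp only [Nat.add_sub_cancel_left] at key
    rw [Nat.add_sub_add_left, pow_add]
    calc _ = (((k + w).descFactorial k * (k + m).choose (k + w) : ℕ) : R) *
            (a ^ k * a ^ w * b ^ (m - w)) := by push_cast; ring
      _ = _ := by rw [key]; push_cast; ring
  rw [Nat.add_sub_cancel_left, add_pow, mul_sum, add_assoc, sum_range_add,
    sum_eq_zero hlow, zero_add, sum_congr rfl hhigh]

theorem ENNReal.tsum_sum_antidiagonal (F : ℕ × ℕ → ℝ≥0∞) :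
    ∑' n, ∑ ij ∈ antidiagonal n, F ij = ∑' ij, F ij := by
  rw [← HasAntidiagonal.sigmaAntidiagonalEquivProd.tsum_eq, ENNReal.tsum_sigma']
  exact tsum_congr fun n => (Finset.tsum_subtype _ F).symm

theorem binomial_conv_succ_le {a b : ℕ → ℝ≥0∞} {l m : ℝ≥0∞} (ha : ∀ t, a (t + 1) ≤ l * a t)
    (hb : ∀ t, b (t + 1) ≤ m * b t) (k : ℕ) :
    ∑ ij ∈ antidiagonal (k + 1), ((k + 1).choose ij.1 : ℝ≥0∞) * (a ij.1 * b ij.2) ≤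
      (l + m) * ∑ ij ∈ antidiagonal k, (k.choose ij.1 : ℝ≥0∞) * (a ij.1 * b ij.2) := by
  rw [sum_antidiagonal_choose_succ_mul (fun i j => a i * b j), add_mul, mul_sum, mul_sum,
    add_comm]
  refine add_le_add (sum_le_sum fun ij hij => ?_) (sum_le_sum fun ij _ => ?_)
  · rw [Nat.choose_symm_of_eq_add (mem_antidiagonal.mp hij).symm]
    calc (k.choose ij.2 : ℝ≥0∞) * (a (ij.1 + 1) * b ij.2)
        ≤ k.choose ij.2 * (l * a ij.1 * b ij.2) := by gcongr; exact ha _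
      _ = l * (k.choose ij.2 * (a ij.1 * b ij.2)) := by ring
  · calc (k.choose ij.1 : ℝ≥0∞) * (a ij.1 * b (ij.2 + 1))
        ≤ k.choose ij.1 * (a ij.1 * (m * b ij.2)) := by gcongr; exact hb _
      _ = m * (k.choose ij.1 * (a ij.1 * b ij.2)) := by ring

section Convolution

variable {P Q : ℕ → ℝ}

theorem ofReal_conv (hP : ∀ x, 0 ≤ P x) (hQ : ∀ x, 0 ≤ Q x) (n : ℕ) :
    ENNReal.ofReal (conv P Q n) =
      ∑ ij ∈ antidiagonal n, ENNReal.ofReal (P ij.1) * ENNReal.ofReal (Q ij.2) := by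
  rw [conv, ← Nat.sum_antidiagonal_eq_sum_range_succ (fun i j => P i * Q j),
    ENNReal.ofReal_sum_of_nonneg fun ij _ => mul_nonneg (hP _) (hQ _)]
  exact sum_congr rfl fun ij _ => ENNReal.ofReal_mul (hP _)

theorem fmE_conv (hP : ∀ x, 0 ≤ P x) (hQ : ∀ x, 0 ≤ Q x) (k : ℕ) :
    fmE (conv P Q) k =
      ∑ ab ∈ antidiagonal k, (k.choose ab.1 : ℝ≥0∞) * (fmE P ab.1 * fmE Q ab.2) := by
  set p : ℕ → ℝ≥0∞ := fun x => ENNReal.ofReal (P x)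
  set q : ℕ → ℝ≥0∞ := fun x => ENNReal.ofReal (Q x)
  calc fmE (conv P Q) k
      = ∑' n, ∑ ij ∈ antidiagonal n, p ij.1 * q ij.2 * ((ij.1 + ij.2).descFactorial k : ℝ≥0∞) := by
        refine tsum_congr fun n => ?_
        rw [ofReal_conv hP hQ, sum_mul]
        exact sum_congr rfl fun ij hij => by rw [mem_antidiagonal.mp hij]
    _ = ∑' i, ∑' j, ∑ ab ∈ antidiagonal k, (k.choose ab.1 : ℝ≥0∞) *
          ((p i * i.descFactorial ab.1) * (q j * j.descFactorial ab.2)) := by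
        rw [ENNReal.tsum_sum_antidiagonal, ENNReal.tsum_prod']
        refine tsum_congr fun i => tsum_congr fun j => ?_
        rw [Nat.descFactorial_add, Nat.cast_sum, mul_sum]
        push_cast
        exact sum_congr rfl fun ab _ => by ring
    _ = ∑ ab ∈ antidiagonal k, ∑' i, ∑' j, (k.choose ab.1 : ℝ≥0∞) *
          ((p i * i.descFactorial ab.1) * (q j * j.descFactorial ab.2)) := by
        rw [← Summable.tsum_finsetSum fun _ _ => ENNReal.summable]
        exact tsum_congr fun i => Summable.tsum_finsetSum fun _ _ => ENNReal.summable
    _ = _ := sum_congr rfl fun ab _ => by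
        simp only [ENNReal.tsum_mul_left, ENNReal.tsum_mul_right]
        rfl

theorem IsUB.conv {lam mu : ℝ} (hP : ∀ x, 0 ≤ P x) (hQ : ∀ x, 0 ≤ Q x) (hlam : 0 ≤ lam)
    (hmu : 0 ≤ mu) (hPub : IsUB P lam) (hQub : IsUB Q mu) : IsUB (conv P Q) (lam + mu) :=
  fun k => by
    rw [fmE_conv hP hQ, fmE_conv hP hQ, ENNReal.ofReal_add hlam hmu]
    exact binomial_conv_succ_le hPub hQub k

end Convolution

section Thinning

variable {P : ℕ → ℝ} {α : ℝ}

theorem choose_mul_pow_mul_pow_le_one (hα0 : 0 ≤ α) (hα1 : α ≤ 1) (x z : ℕ) :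
    (x.choose z : ℝ) * α ^ z * (1 - α) ^ (x - z) ≤ 1 := by
  rcases lt_or_ge x z with hxz | hzx
  · simp [Nat.choose_eq_zero_of_lt hxz]
  have h1α : 0 ≤ 1 - α := sub_nonneg.mpr hα1
  calc (x.choose z : ℝ) * α ^ z * (1 - α) ^ (x - z)
      = α ^ z * (1 - α) ^ (x - z) * x.choose z := by ring
    _ ≤ ∑ y ∈ range (x + 1), α ^ y * (1 - α) ^ (x - y) * x.choose y :=
        single_le_sum (f := fun y => α ^ y * (1 - α) ^ (x - y) * x.choose y)
          (fun y _ => by positivity) (mem_range.mpr (Nat.lt_succ_of_le hzx))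
    _ = 1 := by rw [← add_pow, add_sub_cancel, one_pow]

theorem ofReal_thin (hP : ∀ x, 0 ≤ P x) (hPs : Summable P) (hα0 : 0 ≤ α) (hα1 : α ≤ 1)
    (z : ℕ) :
    ENNReal.ofReal (thin α P z) = ∑' x, ENNReal.ofReal (P x) *
      ENNReal.ofReal ((x.choose z : ℝ) * α ^ z * (1 - α) ^ (x - z)) := by
  have h1α : 0 ≤ 1 - α := sub_nonneg.mpr hα1
  have hnonneg : ∀ x, 0 ≤ P x * (x.choose z : ℝ) * α ^ z * (1 - α) ^ (x - z) := fun x => by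
    have := hP x; positivity
  have hsum : Summable fun x => P x * (x.choose z : ℝ) * α ^ z * (1 - α) ^ (x - z) :=
    hPs.of_nonneg_of_le hnonneg fun x => calc
      _ = P x * ((x.choose z : ℝ) * α ^ z * (1 - α) ^ (x - z)) := by ring
      _ ≤ P x := mul_le_of_le_one_right (hP x) (choose_mul_pow_mul_pow_le_one hα0 hα1 x z)
  rw [thin, ENNReal.ofReal_tsum_of_nonneg hnonneg hsum]
  exact tsum_congr fun x => by rw [← ENNReal.ofReal_mul (hP x)]; simp only [mul_assoc]

theorem tsum_ofReal_choose_mul_pow_mul_descFactorial (hα0 : 0 ≤ α) (hα1 : α ≤ 1) (x k : ℕ) :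
    ∑' z, ENNReal.ofReal ((x.choose z : ℝ) * α ^ z * (1 - α) ^ (x - z)) * z.descFactorial k =
      ENNReal.ofReal α ^ k * x.descFactorial k := by
  have h1α : 0 ≤ 1 - α := sub_nonneg.mpr hα1
  rw [tsum_eq_sum (s := range (x + 1)) fun z hz => by
    simp [Nat.choose_eq_zero_of_lt (show x < z by simpa using hz)]]
  have hterm : ∀ z, ENNReal.ofReal ((x.choose z : ℝ) * α ^ z * (1 - α) ^ (x - z)) *
      z.descFactorial k =
        ENNReal.ofReal ((x.choose z : ℝ) * α ^ z * (1 - α) ^ (x - z) * z.descFactorial k) :=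
    fun z => by rw [ENNReal.ofReal_mul' (Nat.cast_nonneg _), ENNReal.ofReal_natCast]
  rw [sum_congr rfl fun z _ => hterm z, ← ENNReal.ofReal_sum_of_nonneg fun _ _ => by positivity,
    Nat.sum_range_choose_mul_pow_mul_descFactorial, add_sub_cancel, one_pow, mul_one,
    ENNReal.ofReal_mul (by positivity), ENNReal.ofReal_pow hα0, ENNReal.ofReal_natCast, mul_comm]

theorem fmE_thin (hP : ∀ x, 0 ≤ P x) (hPs : Summable P) (hα0 : 0 ≤ α) (hα1 : α ≤ 1)
    (k : ℕ) : fmE (thin α P) k = ENNReal.ofReal α ^ k * fmE P k := by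
  simp only [fmE, ofReal_thin hP hPs hα0 hα1, ← ENNReal.tsum_mul_right]
  rw [ENNReal.tsum_comm, ← ENNReal.tsum_mul_left]
  refine tsum_congr fun x => ?_
  simp only [mul_assoc (ENNReal.ofReal (P x)), ENNReal.tsum_mul_left,
    tsum_ofReal_choose_mul_pow_mul_descFactorial hα0 hα1]
  ring

theorem IsUB.thin {lam : ℝ} (hP : ∀ x, 0 ≤ P x) (hPs : Summable P) (hα0 : 0 ≤ α)
    (hα1 : α ≤ 1) (hPub : IsUB P lam) : IsUB (thin α P) (α * lam) := fun k => by
  rw [fmE_thin hP hPs hα0 hα1, fmE_thin hP hPs hα0 hα1, pow_succ, ENNReal.ofReal_mul hα0]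
  calc ENNReal.ofReal α ^ k * ENNReal.ofReal α * fmE P (k + 1)
      ≤ ENNReal.ofReal α ^ k * ENNReal.ofReal α * (ENNReal.ofReal lam * fmE P k) := by
        gcongr; exact hPub k
    _ = _ := by ring

end Thinning

/-- Ultra boundedness is preserved under convolution (independent sums) and thinning. -/
theorem ub_conv_and_thin (P Q : ℕ → ℝ) (hP : IsPMF P) (hQ : IsPMF Q)
    (lam mu : ℝ) (hlam : 0 < lam) (hmu : 0 < mu)
    (hPub : IsUB P lam) (hQub : IsUB Q mu) :
    IsUB (conv P Q) (lam + mu) ∧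
      ∀ α ∈ Set.Ioo (0 : ℝ) 1, IsUB (thin α P) (α * lam) :=
  ⟨hPub.conv hP.1 hQ.1 hlam.le hmu.le hQub,
    fun _ hα => hPub.thin hP.1 hP.2.summable hα.1.le hα.2.le⟩
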